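/- arXiv:1906.05545 — 3 statements merged into one kernel-verified Lean document; each statement's English description precedes it below -/
import Mathlib

section
/- Let N ≥ 1 and let Λ be a real N×r matrix. Then the matrix I_N + Λ Λᵀ is positive definite (in particular invertible), and the trace of its inverse satisfies tr((I_N + Λ Λᵀ)⁻¹) ≤ N − tr(Λ Λᵀ) / (N + tr(Λ Λᵀ)). (This is Proposition 1 of the paper, stated with Σ_u = I_N: the sum of the eigenvalues of the precision matrix Σ⁻¹ = (Λ Λᵀ + I_N)⁻¹ is at most the sum of eigenvalues of I_N minus tr(Λ Λᵀ)/(N + tr(Λ Λᵀ)).) -/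
/-!
Diagonalising the positive semidefinite matrix `Λ Λᵀ` with eigenvalues `μᵢ ≥ 0` turns the trace
of `(1 + Λ Λᵀ)⁻¹` into `∑ (1 + μᵢ)⁻¹ = N - ∑ μᵢ / (1 + μᵢ)`. Since each `1 + μᵢ ≤ N + ∑ⱼ μⱼ`,
the subtracted sum is at least `∑ μᵢ / (N + ∑ⱼ μⱼ) = tr(Λ Λᵀ) / (N + tr(Λ Λᵀ))`.
-/

open Matrix Finset

theorem Finset.sum_inv_one_add_le_card_sub {ι K : Type*} [Field K] [LinearOrder K]
    [IsStrictOrderedRing K] (s : Finset ι) {μ : ι → K} (hμ : ∀ i ∈ s, 0 ≤ μ i) :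
    ∑ i ∈ s, (1 + μ i)⁻¹ ≤ #s - (∑ i ∈ s, μ i) / (#s + ∑ i ∈ s, μ i) := by
  set t := ∑ i ∈ s, μ i
  have h_inv : ∀ i ∈ s, (1 + μ i)⁻¹ = 1 - μ i / (1 + μ i) := fun i hi => by
    have : 0 < 1 + μ i := by linarith [hμ i hi]
    field_simp
    ring
  have h_term : ∀ i ∈ s, μ i / (#s + t) ≤ μ i / (1 + μ i) := fun i hi => by
    have h_card : (1 : K) ≤ #s := by exact_mod_cast one_le_card.mpr ⟨i, hi⟩
    have h_le : μ i ≤ t := single_le_sum hμ hi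
    exact div_le_div_of_nonneg_left (hμ i hi) (by linarith [hμ i hi]) (by linarith)
  calc ∑ i ∈ s, (1 + μ i)⁻¹ = #s - ∑ i ∈ s, μ i / (1 + μ i) := by
        rw [sum_congr rfl h_inv, sum_sub_distrib]; simp
    _ ≤ #s - ∑ i ∈ s, μ i / (#s + t) := sub_le_sub_left (sum_le_sum h_term) _
    _ = #s - t / (#s + t) := by rw [sum_div]

namespace Matrix.IsHermitian

variable {𝕜 n : Type*} [RCLike 𝕜] [Fintype n] [DecidableEq n] {A : Matrix n n 𝕜}

theorem trace_cfc (hA : A.IsHermitian) (f : ℝ → ℝ) :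
    (cfc f A).trace = ∑ i, (f (hA.eigenvalues i) : 𝕜) := by
  rw [hA.cfc_eq, IsHermitian.cfc, Unitary.conjStarAlgAut_apply, trace_mul_cycle,
    Unitary.coe_star_mul_self, one_mul, trace_diagonal]
  rfl

theorem inv_one_add_eq_cfc (hA : A.IsHermitian) (h : ∀ i, 1 + hA.eigenvalues i ≠ 0) :
    (1 + A)⁻¹ = cfc (fun x : ℝ => (1 + x)⁻¹) A := by
  rw [nonsing_inv_eq_ringInverse, cfc_inv (fun x : ℝ => 1 + x) A,
    cfc_const_add (1 : ℝ) (fun x => x) A, cfc_id' ℝ A, map_one]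
  simpa [hA.spectrum_real_eq_range_eigenvalues] using h

end Matrix.IsHermitian

theorem Matrix.PosSemidef.trace_inv_one_add_le {n : Type*} [Fintype n] [DecidableEq n]
    {A : Matrix n n ℝ} (hA : A.PosSemidef) :
    ((1 + A)⁻¹).trace ≤ Fintype.card n - A.trace / (Fintype.card n + A.trace) := by
  have h_eig := hA.eigenvalues_nonneg
  rw [hA.isHermitian.inv_one_add_eq_cfc fun i => by linarith [h_eig i],
    hA.isHermitian.trace_cfc, hA.isHermitian.trace_eq_sum_eigenvalues]
  simpa using univ.sum_inv_one_add_le_card_sub fun i _ => h_eig i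

theorem saf_gmvp_precision_trace_bound_general (N r : ℕ)
    (Λ : Matrix (Fin N) (Fin r) ℝ) :
    (1 + Λ * Λᵀ).PosDef ∧ IsUnit (1 + Λ * Λᵀ) ∧
      ((1 + Λ * Λᵀ)⁻¹).trace ≤
        (N : ℝ) - (Λ * Λᵀ).trace / ((N : ℝ) + (Λ * Λᵀ).trace) := by
  have h_psd : (Λ * Λᵀ).PosSemidef := by
    simpa [conjTranspose_eq_transpose_of_trivial] using posSemidef_self_mul_conjTranspose Λ
  have h_pd : (1 + Λ * Λᵀ).PosDef := PosDef.one.add_posSemidef h_psd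
  refine ⟨h_pd, h_pd.isUnit, ?_⟩
  simpa using h_psd.trace_inv_one_add_le

/-- Proposition 1 (with Σ_u = I_N): for an N×r loadings matrix Λ, the matrix
I_N + Λ Λᵀ is positive definite (hence invertible) and
tr((I_N + Λ Λᵀ)⁻¹) ≤ N − tr(Λ Λᵀ)/(N + tr(Λ Λᵀ)). -/
theorem saf_gmvp_precision_trace_bound (N r : ℕ) (hN : 1 ≤ N)
    (Λ : Matrix (Fin N) (Fin r) ℝ) :
    (1 + Λ * Λᵀ).PosDef ∧ IsUnit (1 + Λ * Λᵀ) ∧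
      ((1 + Λ * Λᵀ)⁻¹).trace ≤
        (N : ℝ) - (Λ * Λᵀ).trace / ((N : ℝ) + (Λ * Λᵀ).trace) :=
  saf_gmvp_precision_trace_bound_general N r Λ
end

section
/- Let 1 ≤ p < 2 < q < ∞ and let P be an invertible real n×n matrix such that for every vector x ∈ ℝⁿ, ∑_{i=1}^n |(P x)_i|^p = ∑_{i=1}^n |x_i|^p and ∑_{i=1}^n |(P x)_i|^q = ∑_{i=1}^n |x_i|^q. Then P is a unitary generalized permutation matrix: every column of P contains exactly one nonzero entry, every row of P contains exactly one nonzero entry, and every nonzero entry of P equals 1 or −1. -/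
open Matrix

/-!
Testing the isometry on `e j` and on `e j ± e k` shows that every column of `P` has
`∑ |·|^p` equal to `1` and that `∑ i, |P i j ± P i k|^p = 2` for `j ≠ k`. For `p < 2` the
Clarkson-type inequality `|a + b|^p + |a - b|^p ≤ 2 (|a|^p + |b|^p)` is strict as soon as
`a b ≠ 0`, so summing it over the rows forces distinct columns to have disjoint supports.
Then `n` nonzero columns with disjoint supports inside `n` rows each have a single nonzero
entry, placed in distinct rows, and the column normalization makes that entry `±1`.
-/

section Clarkson

variable {p : ℝ}

lemma abs_rpow_eq_sq_rpow_half (p x : ℝ) : |x| ^ p = (x ^ 2) ^ (p / 2) := by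
  rw [← sq_abs, ← Real.rpow_natCast_mul (abs_nonneg x), Nat.cast_ofNat,
    mul_div_cancel₀ p two_ne_zero]

lemma sq_add_sq_rpow_half_le_abs_rpow_add (hp0 : 0 ≤ p) (hp2 : p ≤ 2) (a b : ℝ) :
    (a ^ 2 + b ^ 2) ^ (p / 2) ≤ |a| ^ p + |b| ^ p := by
  rw [abs_rpow_eq_sq_rpow_half p a, abs_rpow_eq_sq_rpow_half p b]
  exact Real.rpow_add_le_add_rpow (sq_nonneg a) (sq_nonneg b) (by linarith) (by linarith)

lemma abs_add_rpow_add_abs_sub_rpow_le (hp0 : 0 ≤ p) (hp2 : p ≤ 2) (a b : ℝ) :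
    |a + b| ^ p + |a - b| ^ p ≤ 2 * (|a| ^ p + |b| ^ p) := by
  have hmid := (Real.concaveOn_rpow (p := p / 2) (by linarith) (by linarith)).2
    (Set.mem_Ici.2 (sq_nonneg (a + b))) (Set.mem_Ici.2 (sq_nonneg (a - b)))
    (by norm_num : (0 : ℝ) ≤ 1 / 2) (by norm_num : (0 : ℝ) ≤ 1 / 2) (by norm_num)
  simp only [smul_eq_mul] at hmid
  rw [show 1 / 2 * (a + b) ^ 2 + 1 / 2 * (a - b) ^ 2 = a ^ 2 + b ^ 2 by ring] at hmid
  rw [abs_rpow_eq_sq_rpow_half p (a + b), abs_rpow_eq_sq_rpow_half p (a - b)]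
  linarith [sq_add_sq_rpow_half_le_abs_rpow_add hp0 hp2 a b]

lemma abs_add_rpow_add_abs_sub_rpow_lt (hp0 : 0 < p) (hp2 : p < 2) {a b : ℝ} (hab : a * b ≠ 0) :
    |a + b| ^ p + |a - b| ^ p < 2 * (|a| ^ p + |b| ^ p) := by
  have hne : (a + b) ^ 2 ≠ (a - b) ^ 2 := fun h => hab (by linarith)
  have hmid := (Real.strictConcaveOn_rpow (p := p / 2) (by linarith) (by linarith)).2
    (Set.mem_Ici.2 (sq_nonneg (a + b))) (Set.mem_Ici.2 (sq_nonneg (a - b))) hne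
    (by norm_num : (0 : ℝ) < 1 / 2) (by norm_num : (0 : ℝ) < 1 / 2) (by norm_num)
  simp only [smul_eq_mul] at hmid
  rw [show 1 / 2 * (a + b) ^ 2 + 1 / 2 * (a - b) ^ 2 = a ^ 2 + b ^ 2 by ring] at hmid
  rw [abs_rpow_eq_sq_rpow_half p (a + b), abs_rpow_eq_sq_rpow_half p (a - b)]
  linarith [sq_add_sq_rpow_half_le_abs_rpow_add hp0.le hp2.le a b]

end Clarkson

lemma Matrix.existsUnique_ne_zero_of_forall_exists_ne_zero {n α : Type*} [Finite n] [Zero α]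
    {P : Matrix n n α} (hcol : ∀ j, ∃ i, P i j ≠ 0)
    (hrow : ∀ i j k, P i j ≠ 0 → P i k ≠ 0 → j = k) :
    (∀ j, ∃! i, P i j ≠ 0) ∧ ∀ i, ∃! j, P i j ≠ 0 := by
  choose f hf using hcol
  have hbij : Function.Bijective f :=
    Finite.injective_iff_bijective.1 fun j k hjk => hrow (f j) j k (hf j) (hjk ▸ hf k)
  refine ⟨fun j => ⟨f j, hf j, fun i hij => ?_⟩, fun i => ?_⟩
  · obtain ⟨k, rfl⟩ := hbij.2 i
    rw [hrow (f k) k j (hf k) hij]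
  · obtain ⟨j, rfl⟩ := hbij.2 i
    exact ⟨j, hf j, fun k hk => hrow (f j) k j hk (hf j)⟩

def IsLpIsometry {m ι : Type*} [Fintype m] [Fintype ι] (p : ℝ) (P : Matrix m ι ℝ) : Prop :=
  ∀ x : ι → ℝ, ∑ i, |(P *ᵥ x) i| ^ p = ∑ i, |x i| ^ p

namespace IsLpIsometry

variable {m ι : Type*} [Fintype m] [Fintype ι] {p : ℝ} {P : Matrix m ι ℝ}

lemma sum_abs_rpow_col (h : IsLpIsometry p P) (hp : p ≠ 0) (j : ι) :
    ∑ i, |P i j| ^ p = 1 := by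
  classical
  have := h (Pi.single j 1)
  rw [mulVec_single_one, Fintype.sum_eq_single j fun i hij => by
    simp [Pi.single_eq_of_ne hij, Real.zero_rpow hp]] at this
  simpa using this

lemma sum_abs_rpow_smul_col_add_smul_col (h : IsLpIsometry p P) (hp : p ≠ 0) {j k : ι}
    (hjk : j ≠ k) (a b : ℝ) :
    ∑ i, |a * P i j + b * P i k| ^ p = |a| ^ p + |b| ^ p := by
  classical
  have := h (Pi.single j a + Pi.single k b)
  rw [mulVec_add, mulVec_single, mulVec_single, Fintype.sum_eq_add j k hjk fun i hi => by
    simp [Pi.single_eq_of_ne hi.1, Pi.single_eq_of_ne hi.2, Real.zero_rpow hp]] at this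
  simpa [Pi.single_eq_of_ne hjk, Pi.single_eq_of_ne hjk.symm] using this

lemma exists_ne_zero (h : IsLpIsometry p P) (hp : p ≠ 0) (j : ι) : ∃ i, P i j ≠ 0 := by
  by_contra! hzero
  have := h.sum_abs_rpow_col hp j
  simp [hzero, Real.zero_rpow hp] at this

lemma mul_eq_zero (h : IsLpIsometry p P) (hp0 : 0 < p) (hp2 : p < 2) {j k : ι} (hjk : j ≠ k)
    (i : m) : P i j * P i k = 0 := by
  by_contra hi
  have hlt := Finset.sum_lt_sum (s := Finset.univ)
    (fun i _ => abs_add_rpow_add_abs_sub_rpow_le hp0.le hp2.le (P i j) (P i k))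
    ⟨i, Finset.mem_univ i, abs_add_rpow_add_abs_sub_rpow_lt hp0 hp2 hi⟩
  have hadd := h.sum_abs_rpow_smul_col_add_smul_col hp0.ne' hjk 1 1
  have hsub := h.sum_abs_rpow_smul_col_add_smul_col hp0.ne' hjk 1 (-1)
  simp only [one_mul, neg_one_mul, ← sub_eq_add_neg, abs_one, abs_neg, Real.one_rpow] at hadd hsub
  rw [Finset.sum_add_distrib, hadd, hsub, ← Finset.mul_sum, Finset.sum_add_distrib,
    h.sum_abs_rpow_col hp0.ne', h.sum_abs_rpow_col hp0.ne'] at hlt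
  norm_num at hlt

lemma abs_eq_one (h : IsLpIsometry p P) (hp : p ≠ 0) {i : m} {j : ι}
    (hi : ∀ i', P i' j ≠ 0 → i' = i) : |P i j| = 1 := by
  have hsum := h.sum_abs_rpow_col hp j
  rw [Fintype.sum_eq_single i fun i' hi' => by
    rw [not_not.1 (mt (hi i') hi'), abs_zero, Real.zero_rpow hp]] at hsum
  rwa [← Real.rpow_left_inj (abs_nonneg _) zero_le_one hp, Real.one_rpow]

end IsLpIsometry

theorem lp_lq_isometry_is_generalized_permutation_general (n : ℕ) (p : ℝ)
    (hp1 : 1 ≤ p) (hp2 : p < 2)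
    (P : Matrix (Fin n) (Fin n) ℝ)
    (hiso_p : ∀ x : Fin n → ℝ, ∑ i, |(P *ᵥ x) i| ^ p = ∑ i, |x i| ^ p) :
    (∀ j, ∃! i, P i j ≠ 0) ∧ (∀ i, ∃! j, P i j ≠ 0) ∧
      ∀ i j, P i j ≠ 0 → P i j = 1 ∨ P i j = -1 := by
  have hp : 0 < p := by linarith
  have hiso : IsLpIsometry p P := hiso_p
  obtain ⟨hcol, hrow⟩ := Matrix.existsUnique_ne_zero_of_forall_exists_ne_zero
    (hiso.exists_ne_zero hp.ne') fun i j k hj hk => by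
      by_contra hjk
      exact mul_ne_zero hj hk (hiso.mul_eq_zero hp hp2 hjk i)
  exact ⟨hcol, hrow, fun i j hij =>
    (abs_eq zero_le_one).1 (hiso.abs_eq_one hp.ne' fun i' hi' => (hcol j).unique hi' hij)⟩

/-- Section S.1.4: an invertible matrix that is simultaneously an isometry for the
entrywise ℓ_p norm (1 ≤ p < 2) and for the entrywise ℓ_q norm (2 < q < ∞) is a
unitary generalized permutation matrix: each column and each row has exactly one
nonzero entry, and every nonzero entry is 1 or −1. -/
theorem lp_lq_isometry_is_generalized_permutation (n : ℕ) (p q : ℝ)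
    (hp1 : 1 ≤ p) (hp2 : p < 2) (hq : 2 < q)
    (P : Matrix (Fin n) (Fin n) ℝ) (hP : IsUnit P)
    (hiso_p : ∀ x : Fin n → ℝ, ∑ i, |(P *ᵥ x) i| ^ p = ∑ i, |x i| ^ p)
    (hiso_q : ∀ x : Fin n → ℝ, ∑ i, |(P *ᵥ x) i| ^ q = ∑ i, |x i| ^ q) :
    (∀ j, ∃! i, P i j ≠ 0) ∧ (∀ i, ∃! j, P i j ≠ 0) ∧
      ∀ i j, P i j ≠ 0 → P i j = 1 ∨ P i j = -1 :=
  lp_lq_isometry_is_generalized_permutation_general n p hp1 hp2 P hiso_p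
end

section
/- Let Σ be a symmetric positive definite real N×N matrix, let Λ be a real N×r matrix, and let b, c > 0 be constants such that vᵀ Σ v ≤ c ‖v‖² for all v ∈ ℝᴺ and wᵀ (Λᵀ Λ) w ≥ b ‖w‖² for all w ∈ ℝʳ. Then I_r + Λᵀ Σ⁻¹ Λ is positive definite and wᵀ (I_r + Λᵀ Σ⁻¹ Λ)⁻¹ w ≤ (c/b) ‖w‖² for every w ∈ ℝʳ. -/
/-!
Write `M = 1 + Λᵀ Σ⁻¹ Λ`. Then `xᵀ M x ≥ (Λx)ᵀ Σ⁻¹ (Λx) ≥ ‖Λx‖² / c ≥ (b / c) ‖x‖²`, i.e.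
`M ≥ (b / c) I`, and inverting gives `M⁻¹ ≤ (c / b) I`. Both inversions of a quadratic-form
bound (from `Σ ≤ c I` to `Σ⁻¹ ≥ c⁻¹ I`, and from `M ≥ (b / c) I` to `M⁻¹ ≤ (c / b) I`) are
instances of Cauchy–Schwarz for a positive semidefinite form.
-/

open Matrix

namespace Matrix

variable {m n : Type*} [Fintype m] [Fintype n]

theorem dotProduct_self_nonneg (v : n → ℝ) : 0 ≤ v ⬝ᵥ v := by
  simpa using dotProduct_star_self_nonneg v

theorem IsHermitian.dotProduct_mulVec_comm {A : Matrix n n ℝ} (hA : A.IsHermitian) (x y : n → ℝ) :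
    x ⬝ᵥ A *ᵥ y = y ⬝ᵥ A *ᵥ x := by
  rw [dotProduct_mulVec, ← mulVec_transpose, ← conjTranspose_eq_transpose_of_trivial, hA.eq,
    dotProduct_comm]

theorem dotProduct_transpose_mul_mul_mulVec {R : Type*} [CommSemiring R] (Λ : Matrix m n R)
    (B : Matrix m m R) (x y : n → R) :
    x ⬝ᵥ (Λᵀ * B * Λ) *ᵥ y = Λ *ᵥ x ⬝ᵥ B *ᵥ (Λ *ᵥ y) := by
  rw [Matrix.mul_assoc, ← mulVec_mulVec, dotProduct_mulVec, vecMul_transpose, mulVec_mulVec]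

theorem dotProduct_transpose_mul_mulVec {R : Type*} [CommSemiring R] (Λ : Matrix m n R)
    (x y : n → R) :
    x ⬝ᵥ (Λᵀ * Λ) *ᵥ y = Λ *ᵥ x ⬝ᵥ Λ *ᵥ y := by
  rw [← mulVec_mulVec, dotProduct_mulVec, vecMul_transpose]

variable [DecidableEq n]

theorem PosSemidef.dotProduct_mulVec_mul_le {A : Matrix n n ℝ} (hA : A.PosSemidef)
    (x y : n → ℝ) : (x ⬝ᵥ A *ᵥ y) * (y ⬝ᵥ A *ᵥ x) ≤ (x ⬝ᵥ A *ᵥ x) * (y ⬝ᵥ A *ᵥ y) := by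
  simpa only [toLinearMap₂'_apply'] using
    LinearMap.BilinForm.apply_mul_apply_le_of_forall_zero_le (toLinearMap₂' ℝ A)
      (fun v => by simpa [toLinearMap₂'_apply'] using hA.dotProduct_mulVec_nonneg v) x y

theorem PosDef.dotProduct_self_le_mul_dotProduct_inv_mulVec {A : Matrix n n ℝ} (hA : A.PosDef)
    {c : ℝ} {v : n → ℝ} (hv : v ⬝ᵥ A *ᵥ v ≤ c * (v ⬝ᵥ v)) :
    v ⬝ᵥ v ≤ c * (v ⬝ᵥ A⁻¹ *ᵥ v) := by
  have hinv : A⁻¹ *ᵥ (A *ᵥ v) = v := by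
    rw [mulVec_mulVec, nonsing_inv_mul _ ((isUnit_iff_isUnit_det A).mp hA.isUnit), one_mulVec]
  have cs := hA.inv.posSemidef.dotProduct_mulVec_mul_le v (A *ᵥ v)
  rw [hinv, hA.inv.isHermitian.dotProduct_mulVec_comm, hinv, dotProduct_comm (A *ᵥ v)] at cs
  have ht : 0 ≤ v ⬝ᵥ A⁻¹ *ᵥ v := by simpa using hA.inv.posSemidef.dotProduct_mulVec_nonneg v
  rcases (dotProduct_self_nonneg v).eq_or_lt with h0 | hpos
  · rw [← h0, dotProduct_self_eq_zero.mp h0.symm]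
    simp
  · refine le_of_mul_le_mul_right ?_ hpos
    calc v ⬝ᵥ v * v ⬝ᵥ v ≤ v ⬝ᵥ A⁻¹ *ᵥ v * v ⬝ᵥ A *ᵥ v := cs
      _ ≤ v ⬝ᵥ A⁻¹ *ᵥ v * (c * v ⬝ᵥ v) := mul_le_mul_of_nonneg_left hv ht
      _ = c * v ⬝ᵥ A⁻¹ *ᵥ v * v ⬝ᵥ v := by ring

theorem PosDef.dotProduct_inv_mulVec_le_inv_mul_dotProduct_self {A : Matrix n n ℝ} (hA : A.PosDef)
    {a : ℝ} (ha : 0 < a) (hA_ge : ∀ v, a * (v ⬝ᵥ v) ≤ v ⬝ᵥ A *ᵥ v) (w : n → ℝ) :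
    w ⬝ᵥ A⁻¹ *ᵥ w ≤ a⁻¹ * (w ⬝ᵥ w) := by
  set u := A⁻¹ *ᵥ w
  have hu : A *ᵥ u = w := by
    rw [mulVec_mulVec, mul_nonsing_inv _ ((isUnit_iff_isUnit_det A).mp hA.isUnit), one_mulVec]
  have hlow := hA_ge u
  have cs := PosSemidef.one.dotProduct_mulVec_mul_le u w
  rw [hu] at hlow
  simp only [one_mulVec] at cs
  rw [dotProduct_comm w u] at cs
  have ht : 0 ≤ u ⬝ᵥ w := by
    rw [dotProduct_comm]
    simpa using hA.inv.posSemidef.dotProduct_mulVec_nonneg w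
  rw [dotProduct_comm w u, le_inv_mul_iff₀ ha]
  rcases ht.eq_or_lt with h0 | hpos
  · rw [← h0, mul_zero]
    exact dotProduct_self_nonneg w
  · refine le_of_mul_le_mul_right ?_ hpos
    calc a * u ⬝ᵥ w * u ⬝ᵥ w ≤ a * (u ⬝ᵥ u * w ⬝ᵥ w) := by
          rw [mul_assoc]
          exact mul_le_mul_of_nonneg_left cs ha.le
      _ = a * u ⬝ᵥ u * w ⬝ᵥ w := by ring
      _ ≤ u ⬝ᵥ w * w ⬝ᵥ w := mul_le_mul_of_nonneg_right hlow (dotProduct_self_nonneg w)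
      _ = w ⬝ᵥ w * u ⬝ᵥ w := mul_comm _ _

end Matrix

/-- Displays (S.3)–(S.4) of Lemma S.1 / Lemma S.10(i): if Σ is symmetric positive
definite with largest eigenvalue at most c and Λᵀ Λ has smallest eigenvalue at
least b > 0, then I_r + Λᵀ Σ⁻¹ Λ is positive definite and
wᵀ (I_r + Λᵀ Σ⁻¹ Λ)⁻¹ w ≤ (c/b) ‖w‖² for every w. -/
theorem quadratic_upper_bound_inv_one_add (N r : ℕ)
    (S : Matrix (Fin N) (Fin N) ℝ) (hS : S.PosDef)
    (Λ : Matrix (Fin N) (Fin r) ℝ) (b c : ℝ) (hb : 0 < b) (hc : 0 < c)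
    (hSc : ∀ v : Fin N → ℝ, v ⬝ᵥ S *ᵥ v ≤ c * (v ⬝ᵥ v))
    (hΛb : ∀ w : Fin r → ℝ, b * (w ⬝ᵥ w) ≤ w ⬝ᵥ (Λᵀ * Λ) *ᵥ w) :
    (1 + Λᵀ * S⁻¹ * Λ).PosDef ∧
      ∀ w : Fin r → ℝ, w ⬝ᵥ (1 + Λᵀ * S⁻¹ * Λ)⁻¹ *ᵥ w ≤ (c / b) * (w ⬝ᵥ w) := by
  have hM : (1 + Λᵀ * S⁻¹ * Λ).PosDef := by
    refine PosDef.one.add_posSemidef ?_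
    simpa only [conjTranspose_eq_transpose_of_trivial] using
      hS.inv.posSemidef.conjTranspose_mul_mul_same Λ
  have hM_ge : ∀ x, b / c * (x ⬝ᵥ x) ≤ x ⬝ᵥ (1 + Λᵀ * S⁻¹ * Λ) *ᵥ x := by
    intro x
    have hΛx : b * (x ⬝ᵥ x) ≤ Λ *ᵥ x ⬝ᵥ Λ *ᵥ x := by
      simpa only [dotProduct_transpose_mul_mulVec] using hΛb x
    have hSx := hS.dotProduct_self_le_mul_dotProduct_inv_mulVec (hSc (Λ *ᵥ x))
    rw [add_mulVec, one_mulVec, dotProduct_add, dotProduct_transpose_mul_mul_mulVec,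
      div_mul_eq_mul_div, div_le_iff₀ hc]
    linarith [mul_nonneg hc.le (dotProduct_self_nonneg x)]
  refine ⟨hM, fun w => ?_⟩
  simpa only [inv_div] using
    hM.dotProduct_inv_mulVec_le_inv_mul_dotProduct_self (div_pos hb hc) hM_ge w
end
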